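/- For n ≥ 4, the automorphism group of the generalised quaternion group Q_{2^n} consists exactly of the maps θ_{i,j} : x ↦ x^i, y ↦ x^j y for i ∈ (ℤ/2^{n-1})^× and j ∈ ℤ/2^{n-1}. -/
import Mathlib

open QuaternionGroup

section helper

variable {m : ℕ}

/-- The automorphism θ_{u,j} of the quaternion group, sending `a k ↦ a (u*k)` and
`xa k ↦ xa (u*k - j)`. -/
def thetaEquiv (u : (ZMod (2 * m))ˣ) (j : ZMod (2 * m))
    (hu : (u : ZMod (2 * m)) * (m : ZMod (2 * m)) = (m : ZMod (2 * m))) :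
    QuaternionGroup m ≃* QuaternionGroup m where
  toFun g := match g with
    | a k => a (u * k)
    | xa k => xa (u * k - j)
  invFun g := match g with
    | a k => a ((u⁻¹ : (ZMod (2*m))ˣ) * k)
    | xa k => xa ((u⁻¹ : (ZMod (2*m))ˣ) * k + (u⁻¹ : (ZMod (2*m))ˣ) * j)
  left_inv := by
    rintro (k | k) <;> simp only
    · congr 1
      rw [← mul_assoc, ← Units.val_mul, inv_mul_cancel, Units.val_one, one_mul]
    · congr 1
      rw [mul_sub, ← mul_assoc, ← Units.val_mul, inv_mul_cancel, Units.val_one, one_mul]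
      ring
  right_inv := by
    rintro (k | k) <;> simp only
    · congr 1
      rw [← mul_assoc, ← Units.val_mul, mul_inv_cancel, Units.val_one, one_mul]
    · congr 1
      rw [mul_add, ← mul_assoc, ← mul_assoc, ← Units.val_mul, mul_inv_cancel, Units.val_one,
        one_mul, one_mul]
      ring
  map_mul' := by
    rintro (k | k) (l | l) <;> simp only [a_mul_a, a_mul_xa, xa_mul_a, xa_mul_xa]
    · congr 1; ring
    · congr 1; ring
    · congr 1; ring
    · congr 1
      rw [mul_sub, mul_add, hu]
      ring

theorem thetaEquiv_apply_a (u : (ZMod (2 * m))ˣ) (j : ZMod (2 * m))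
    (hu : (u : ZMod (2 * m)) * (m : ZMod (2 * m)) = (m : ZMod (2 * m)))
    (k : ZMod (2 * m)) :
    thetaEquiv u j hu (a k) = a ((u : ZMod (2 * m)) * k) := rfl

theorem thetaEquiv_apply_xa (u : (ZMod (2 * m))ˣ) (j : ZMod (2 * m))
    (hu : (u : ZMod (2 * m)) * (m : ZMod (2 * m)) = (m : ZMod (2 * m)))
    (k : ZMod (2 * m)) :
    thetaEquiv u j hu (xa k) = xa ((u : ZMod (2 * m)) * k - j) := rfl

theorem a_pow [NeZero m] (i : ZMod (2 * m)) (k : ℕ) :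
    (a i : QuaternionGroup m) ^ k = a (i * (k : ZMod (2 * m))) := by
  haveI : NeZero (2 * m) := ⟨by have := NeZero.ne m; omega⟩
  conv_lhs => rw [← ZMod.natCast_zmod_val i, ← a_one_pow, ← pow_mul, a_one_pow]
  congr 1
  push_cast [ZMod.natCast_zmod_val]
  ring

end helper

/-- For `n ≥ 4`, the automorphisms of the generalised quaternion group `Q_{2^n}`
(realised as `QuaternionGroup (2^(n-2))`, with `x = a 1` and `y = xa 0`) are
exactly the maps `θ_{i,j} : x ↦ x^i, y ↦ x^j y` for `i ∈ (ℤ/2^{n-1})ˣ` and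
`j ∈ ℤ/2^{n-1}`. -/
theorem stmt5 (n : ℕ) (hn : 4 ≤ n) :
    (∀ θ : QuaternionGroup (2 ^ (n - 2)) ≃* QuaternionGroup (2 ^ (n - 2)),
      ∃ i j : ZMod (2 * 2 ^ (n - 2)), IsUnit i ∧
        θ (a 1) = a i ∧ θ (xa 0) = a j * xa 0) ∧
    (∀ i j : ZMod (2 * 2 ^ (n - 2)), IsUnit i →
      ∃ θ : QuaternionGroup (2 ^ (n - 2)) ≃* QuaternionGroup (2 ^ (n - 2)),
        θ (a 1) = a i ∧ θ (xa 0) = a j * xa 0) := by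
  set N := 2 ^ (n - 2) with hN
  haveI : NeZero N := ⟨pow_ne_zero _ two_ne_zero⟩
  have hN4 : 4 ≤ N := by
    have : 2 ≤ n - 2 := by omega
    calc 4 = 2 ^ 2 := by norm_num
    _ ≤ 2 ^ (n - 2) := Nat.pow_le_pow_right (by norm_num) this
  -- units are odd, hence fix `N`
  have hodd : ∀ i : ZMod (2 * N), IsUnit i → i * (N : ZMod (2 * N)) = (N : ZMod (2 * N)) := by
    intro i hi
    have hcop : Nat.Coprime i.val (2 * N) := by
      have := ZMod.val_coe_unit_coprime hi.unit
      simpa using this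
    have h2 : ¬ 2 ∣ i.val := by
      intro h2
      have : (2 : ℕ) ∣ 1 := hcop ▸ Nat.dvd_gcd h2 (dvd_mul_right 2 N)
      omega
    obtain ⟨q, hq⟩ : ∃ q, i.val = 2 * q + 1 := ⟨i.val / 2, by omega⟩
    have hi' : i = ((2 * q + 1 : ℕ) : ZMod (2 * N)) := by rw [← hq, ZMod.natCast_zmod_val]
    rw [hi']
    push_cast
    have h0 : ((2 * N : ℕ) : ZMod (2 * N)) = 0 := ZMod.natCast_self _
    push_cast at h0
    linear_combination (q : ZMod (2 * N)) * h0
  constructor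
  · intro θ
    have hord : orderOf (θ (a 1)) = 2 * N := by
      rw [MulEquiv.orderOf_eq, orderOf_a_one]
    obtain ⟨i, hi⟩ : ∃ i, θ (a 1) = a i := by
      rcases h : θ (a 1) with i | i
      · exact ⟨i, rfl⟩
      · rw [h, orderOf_xa] at hord; omega
    have hiunit : IsUnit i := by
      rw [hi, orderOf_a] at hord
      have hdvd : Nat.gcd (2 * N) i.val ∣ 2 * N := Nat.gcd_dvd_left _ _
      have h2N : 0 < 2 * N := by omega
      have hg : Nat.gcd (2 * N) i.val = 1 := by
        rcases (Nat.div_eq_self.mp hord) with h | h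
        · omega
        · exact h
      rw [← ZMod.natCast_zmod_val i, ZMod.isUnit_iff_coprime]
      exact Nat.coprime_comm.mp hg
    -- θ maps powers of `a` to powers of `a`
    have hamap : ∀ t : ZMod (2 * N), θ (a t) = a (i * t) := by
      intro t
      rw [← ZMod.natCast_zmod_val t, ← a_one_pow, map_pow, hi, a_pow, ZMod.natCast_zmod_val]
    obtain ⟨j, hj⟩ : ∃ j, θ (xa 0) = a j * xa 0 := by
      rcases h0 : θ (xa 0) with t | k
      · exfalso
        set u := hiunit.unit with hu
        have key := hamap ((u⁻¹ : (ZMod (2*N))ˣ) * t)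
        rw [show i * (((u⁻¹ : (ZMod (2*N))ˣ) : ZMod (2*N)) * t) = t by
          rw [← IsUnit.unit_spec hiunit, ← mul_assoc, ← Units.val_mul, mul_inv_cancel,
            Units.val_one, one_mul], ← h0] at key
        have := θ.injective key
        simp at this
      · exact ⟨-k, by rw [a_mul_xa, zero_sub, neg_neg]⟩
    exact ⟨i, j, hiunit, hi, hj⟩
  · intro i j hi
    refine ⟨thetaEquiv hi.unit j (by rw [IsUnit.unit_spec]; exact hodd i hi), ?_, ?_⟩
    · rw [thetaEquiv_apply_a, IsUnit.unit_spec, mul_one]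
    · rw [thetaEquiv_apply_xa, mul_zero, zero_sub, a_mul_xa, zero_sub]
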